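/- Let a, b be elements of an associative ring R with identity. Then 1 + ab is invertible in R if and only if 1 + ba is invertible in R. Moreover, if a² = b² = 0 and 1 + ab is invertible with inverse γ = (1+ab)⁻¹, then 1 + a and 1 − b are invertible and one has the decomposition 1 + ab = (1 + b(1−γ)) · (1−b)(1+a)(1−b)⁻¹(1+a)⁻¹ · (1 + (1−γ)a) · (1 + ba). -/

import Mathlib

/- Common definitions: linear groups over an associative ring with identity,
transvections, elementary subgroups, congruence subgroups, and the
stability-theoretic properties of rings, following V. M. Petechuk,
"Stability of rings". Throughout, `GL(n,R)` is realized as the group of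
units `(Matrix (Fin n) (Fin n) R)ˣ`. -/

open Matrix

section Defs

variable (n : ℕ) (R : Type*) [Ring R]

/-- A transvection: an invertible matrix of the form `1 + r·e_{ij}` with `i ≠ j`. -/
def IsTransvection {n : ℕ} {R : Type*} [Ring R] (g : (Matrix (Fin n) (Fin n) R)ˣ) : Prop :=
  ∃ i j : Fin n, i ≠ j ∧ ∃ r : R, g.val = 1 + Matrix.single i j r

/-- `E_X`: the subgroup of `GL(n,R)` generated by the transvections `t_{ij}(x)`, `x ∈ X`,
`i ≠ j`. -/
def Esub (X : Set R) : Subgroup (Matrix (Fin n) (Fin n) R)ˣ :=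
  Subgroup.closure {g | ∃ i j : Fin n, i ≠ j ∧ ∃ x ∈ X, g.val = 1 + Matrix.single i j x}

/-- `E(n,R) = E_R`. -/
def En : Subgroup (Matrix (Fin n) (Fin n) R)ˣ := Esub n R Set.univ

/-- `E(n,I)`: the normal closure of `E_I` in `E(n,R)`. -/
def EnI {R : Type*} [Ring R] (I : TwoSidedIdeal R) : Subgroup (Matrix (Fin n) (Fin n) R)ˣ :=
  Subgroup.closure {g | ∃ h ∈ En n R, ∃ e ∈ Esub n R (I : Set R), g = h * e * h⁻¹}

/-- `Λ_I`: entrywise reduction `GL(n,R) → GL(n, R/I)`. -/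
def lamI {R : Type*} [Ring R] (I : TwoSidedIdeal R) :
    (Matrix (Fin n) (Fin n) R)ˣ →* (Matrix (Fin n) (Fin n) I.ringCon.Quotient)ˣ :=
  Units.map ((RingCon.mk' I.ringCon).mapMatrix.toMonoidHom)

/-- `C_I = ker Λ_I`: the principal congruence subgroup of level `I`. -/
def CIsub {R : Type*} [Ring R] (I : TwoSidedIdeal R) : Subgroup (Matrix (Fin n) (Fin n) R)ˣ :=
  (lamI n I).ker

/-- `C(n,I) = Λ_I⁻¹(ξGL(n,R/I))`. -/
def CnI {R : Type*} [Ring R] (I : TwoSidedIdeal R) : Subgroup (Matrix (Fin n) (Fin n) R)ˣ :=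
  (Subgroup.center _).comap (lamI n I)

/-- `R` is a commutator ring: `[C(n,I), E(n,R)] = E(n,I) ⊴ GL(n,R)` for every
two-sided ideal `I`. -/
def IsCommutatorRing : Prop :=
  ∀ I : TwoSidedIdeal R, ⁅CnI n I, En n R⁆ = EnI n I ∧ (EnI n I).Normal

/-- Iterated commutator subgroup `[H, K, K, …, K]` (`k` copies of `K`). -/
def iterCommutator {G : Type*} [Group G] (H K : Subgroup G) : ℕ → Subgroup G
  | 0 => H
  | m + 1 => ⁅iterCommutator H K m, K⁆

/-- `R` is weakly-commutator of length `k`: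
`[C(n,I), E(n,R), …, E(n,R)] = E(n,I) ⊴ GL(n,R)` (`k` copies of `E(n,R)`)
simultaneously for every two-sided ideal `I`. -/
def IsWeaklyCommutatorRing (k : ℕ) : Prop :=
  0 < k ∧ ∀ I : TwoSidedIdeal R,
    iterCommutator (CnI n I) (En n R) k = EnI n I ∧ (EnI n I).Normal

/-- `R` is a normal ring: every subgroup invariant under conjugation by `E(n,R)` is
squeezed between `E(n,I)` and `C(n,I)` for some two-sided ideal `I`. -/
def IsNormalRing : Prop :=
  ∀ G : Subgroup (Matrix (Fin n) (Fin n) R)ˣ,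
    (∀ e ∈ En n R, ∀ g ∈ G, e * g * e⁻¹ ∈ G) →
    ∃ I : TwoSidedIdeal R, EnI n I ≤ G ∧ G ≤ CnI n I

/-- `R` is partially normal: every subgroup invariant under conjugation by `E(n,R)`
containing no non-identity transvection is contained in the center of `GL(n,R)`. -/
def IsPartiallyNormalRing : Prop :=
  ∀ N : Subgroup (Matrix (Fin n) (Fin n) R)ˣ,
    (∀ e ∈ En n R, ∀ g ∈ N, e * g * e⁻¹ ∈ N) →
    (∀ g ∈ N, IsTransvection g → g = 1) →
    N ≤ Subgroup.center _

/-- `R` is stable: both commutator and normal. -/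
def IsStableRing : Prop := IsCommutatorRing n R ∧ IsNormalRing n R

/-- The annihilator `Ann I = {r | rI = Ir = 0}` of a two-sided ideal, as a two-sided ideal. -/
def annIdeal {R : Type*} [Ring R] (I : TwoSidedIdeal R) : TwoSidedIdeal R :=
  TwoSidedIdeal.mk' {r : R | ∀ a ∈ I, r * a = 0 ∧ a * r = 0}
    (fun a _ => ⟨zero_mul a, mul_zero a⟩)
    (fun {x y} hx hy a ha => by
      refine ⟨?_, ?_⟩
      · rw [add_mul, (hx a ha).1, (hy a ha).1, add_zero]
      · rw [mul_add, (hx a ha).2, (hy a ha).2, add_zero])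
    (fun {x} hx a ha => by
      refine ⟨?_, ?_⟩
      · rw [neg_mul, (hx a ha).1, neg_zero]
      · rw [mul_neg, (hx a ha).2, neg_zero])
    (fun {x y} hy a ha => by
      refine ⟨?_, ?_⟩
      · rw [mul_assoc, (hy a ha).1, mul_zero]
      · rw [← mul_assoc]
        exact (hy (a * x) (I.mul_mem_right a x ha)).2)
    (fun {x y} hx a ha => by
      refine ⟨?_, ?_⟩
      · rw [mul_assoc]
        exact (hx (y * a) (I.mul_mem_left y a ha)).1
      · rw [← mul_assoc, (hx a ha).2, zero_mul])

end Defs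

/- Write `γ = (1 + ab)⁻¹`. From `a² = b² = 0` one gets `aγ = a` and `γb = b`, so that
`(1 + b(1 - γ))(1 - b) = 1 - bγ` and `(1 - a)(1 + (1 - γ)a) = 1 - γa`; what remains,
`(1 - bγ)(1 + a)(1 + b)(1 - γa)(1 + ba) = 1 + ab`, collapses by the relations
`γ + abγ = γ + γab = 1`. The same relations show that `1 - bγa` inverts `1 + ba`. -/

section OneAddMul

variable {R : Type*} [Ring R] {a b γ : R}

theorem isUnit_one_add_mul_swap (h : IsUnit (1 + a * b)) : IsUnit (1 + b * a) := by
  obtain ⟨w, hw⟩ := h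
  have hr : (1 + a * b) * ↑w⁻¹ = 1 := hw ▸ w.mul_inv
  have hl : ↑w⁻¹ * (1 + a * b) = 1 := hw ▸ w.inv_mul
  exact ⟨⟨1 + b * a, 1 - b * ↑w⁻¹ * a,
    by linear_combination (norm := noncomm_ring) -(b * hr * a),
    by linear_combination (norm := noncomm_ring) -(b * hl * a)⟩, rfl⟩

theorem isUnit_one_add_mul_comm (a b : R) : IsUnit (1 + a * b) ↔ IsUnit (1 + b * a) :=
  ⟨isUnit_one_add_mul_swap, isUnit_one_add_mul_swap⟩

theorem one_add_mul_one_sub_of_mul_self_eq_zero (ha : a * a = 0) : (1 + a) * (1 - a) = 1 := by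
  linear_combination (norm := noncomm_ring) -ha

theorem one_sub_mul_one_add_of_mul_self_eq_zero (ha : a * a = 0) : (1 - a) * (1 + a) = 1 := by
  linear_combination (norm := noncomm_ring) -ha

theorem mul_eq_left_of_mul_self_eq_zero (ha : a * a = 0) (hr : (1 + a * b) * γ = 1) :
    a * γ = a := by
  linear_combination (norm := noncomm_ring) a * hr - ha * b * γ

theorem mul_eq_right_of_mul_self_eq_zero (hb : b * b = 0) (hl : γ * (1 + a * b) = 1) :
    γ * b = b := by
  linear_combination (norm := noncomm_ring) hl * b - γ * a * hb

theorem one_add_mul_eq_mul_commutator_mul (ha : a * a = 0) (hb : b * b = 0)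
    (hr : (1 + a * b) * γ = 1) (hl : γ * (1 + a * b) = 1) :
    1 + a * b = (1 + b * (1 - γ)) * ((1 - b) * (1 + a) * (1 + b) * (1 - a)) *
      (1 + (1 - γ) * a) * (1 + b * a) := by
  have hag := mul_eq_left_of_mul_self_eq_zero ha hr
  have hgb := mul_eq_right_of_mul_self_eq_zero hb hl
  have hleft : (1 + b * (1 - γ)) * (1 - b) = 1 - b * γ := by
    linear_combination (norm := noncomm_ring) b * hgb
  have hright : (1 - a) * (1 + (1 - γ) * a) = 1 - γ * a := by
    linear_combination (norm := noncomm_ring) hag * a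
  symm
  calc (1 + b * (1 - γ)) * ((1 - b) * (1 + a) * (1 + b) * (1 - a)) *
        (1 + (1 - γ) * a) * (1 + b * a)
      = (1 + b * (1 - γ)) * (1 - b) * ((1 + a) * (1 + b)) *
          ((1 - a) * (1 + (1 - γ) * a)) * (1 + b * a) := by simp only [mul_assoc]
    _ = (1 - b * γ) * ((1 + a) * (1 + b)) * (1 - γ * a) * (1 + b * a) := by
      rw [hleft, hright]
    _ = (1 + a + a * b - b * γ * a) * (1 - γ * a) * (1 + b * a) := by
      linear_combination (norm := noncomm_ring)
        (-(b * hl) - b * hgb - hb) * (1 - γ * a) * (1 + b * a)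
    _ = (1 + a * b - b * γ * a) * (1 + b * a) := by
      linear_combination (norm := noncomm_ring)
        (-(hr * a) - hag * a - ha + b * γ * hag * a + b * γ * ha) * (1 + b * a)
    _ = 1 + a * b := by
      linear_combination (norm := noncomm_ring) a * hb * a - b * hl * a

end OneAddMul

/-- `1 + ab` is invertible iff `1 + ba` is; and if `a² = b² = 0` and
`1 + ab` is invertible with inverse `γ`, then `1 + a` and `1 − b` are invertible and
`1 + ab = (1 + b(1−γ))·[1−b, 1+a]·(1 + (1−γ)a)·(1 + ba)`. -/
theorem statement9 {R : Type*} [Ring R] (a b : R) :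
    (IsUnit (1 + a * b) ↔ IsUnit (1 + b * a)) ∧
    (a * a = 0 → b * b = 0 →
      ∀ w : Rˣ, (w : R) = 1 + a * b →
        ∃ u v : Rˣ, (u : R) = 1 - b ∧ (v : R) = 1 + a ∧
          1 + a * b =
            (1 + b * (1 - ((w⁻¹ : Rˣ) : R))) * ((u * v * u⁻¹ * v⁻¹ : Rˣ) : R) *
              (1 + (1 - ((w⁻¹ : Rˣ) : R)) * a) * (1 + b * a)) := by
  refine ⟨isUnit_one_add_mul_comm a b, fun ha hb w hw => ?_⟩
  have hr : (1 + a * b) * ↑w⁻¹ = 1 := hw ▸ w.mul_inv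
  have hl : ↑w⁻¹ * (1 + a * b) = 1 := hw ▸ w.inv_mul
  let u : Rˣ := ⟨1 - b, 1 + b, one_sub_mul_one_add_of_mul_self_eq_zero hb,
    one_add_mul_one_sub_of_mul_self_eq_zero hb⟩
  let v : Rˣ := ⟨1 + a, 1 - a, one_add_mul_one_sub_of_mul_self_eq_zero ha,
    one_sub_mul_one_add_of_mul_self_eq_zero ha⟩
  exact ⟨u, v, rfl, rfl, one_add_mul_eq_mul_commutator_mul ha hb hr hl⟩
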